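/- Lower bound construction for list-decodable mean estimation under bounded covariance (Proposition, part (ii)): For every positive integer n and every α ∈ (0, 1/2], there exist probability measures X, D₁, …, D_n, Y₁, …, Y_n on ℝⁿ such that: (1) X = α·D_i + (1 − α)·Y_i for every i ∈ [n]; (2) each D_i has mean vector (2α)^{−1/2}·e_i and covariance matrix ⪯ I. Consequently, for every finite set L ⊆ ℝⁿ with |L| < n, there exists i ∈ [n] such that every f ∈ L satisfies ‖f − (2α)^{−1/2}·e_i‖₂ ≥ (1/2)·α^{−1/2}. -/

import Mathlib

/-!
Make the coordinates independent. Under `X` each coordinate is `0` with probability `1 - 2α` and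
`±s` with probability `α` each, where `s = (2α)^{-1/2}`, so it has mean `0` and variance
`2αs² = 1`. Under `D i` coordinate `i` is frozen at `s`, and under `Y i` it follows its law under
`X` conditioned on not being `s`; so `X = α D i + (1 - α) Y i` already holds in coordinate `i`, and
it passes to the product measures. The coordinates of `D i` are independent with variances at
most `1`, hence its covariance is `⪯ I`. The means `s eᵢ` are pairwise `s√2 = α^{-1/2}` apart, so
one list element can be within `α^{-1/2} / 2` of at most one of them.
-/

open MeasureTheory ProbabilityTheory WithLp Function

section Update

variable {ι : Type*} [DecidableEq ι] {α : ι → Type*} [∀ i, MeasurableSpace (α i)]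
  {μ : ∀ i, Measure (α i)} {i : ι} {ν : Measure (α i)}

instance MeasureTheory.sigmaFinite_update [∀ j, SigmaFinite (μ j)] [SigmaFinite ν] (j : ι) :
    SigmaFinite (update μ i ν j) := by
  rcases eq_or_ne j i with rfl | h
  · rwa [update_self]
  · rw [update_of_ne h]; infer_instance

instance MeasureTheory.isProbabilityMeasure_update [∀ j, IsProbabilityMeasure (μ j)]
    [IsProbabilityMeasure ν] (j : ι) : IsProbabilityMeasure (update μ i ν j) := by
  rcases eq_or_ne j i with rfl | h
  · rwa [update_self]
  · rw [update_of_ne h]; infer_instance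

theorem MeasureTheory.Measure.pi_eq_smul_add_smul_update [Fintype ι] [∀ j, SigmaFinite (μ j)]
    {ν₁ ν₂ : Measure (α i)} [SigmaFinite ν₁] [SigmaFinite ν₂] {a b : ENNReal}
    (h : μ i = a • ν₁ + b • ν₂) :
    Measure.pi μ = a • Measure.pi (update μ i ν₁) + b • Measure.pi (update μ i ν₂) := by
  refine Measure.pi_eq fun s _ ↦ ?_
  have hrest (ν : Measure (α i)) : ∏ j ∈ {i}ᶜ, update μ i ν j (s j) = ∏ j ∈ {i}ᶜ, μ j (s j) :=
    Finset.prod_congr rfl fun j hj ↦ by rw [update_of_ne (by simpa using hj)]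
  simp only [Measure.add_apply, Measure.smul_apply, Measure.pi_pi, smul_eq_mul]
  rw [Fintype.prod_eq_mul_prod_compl i, Fintype.prod_eq_mul_prod_compl i,
    Fintype.prod_eq_mul_prod_compl i, hrest, hrest, update_self, update_self, h]
  simp only [Measure.add_apply, Measure.smul_apply, smul_eq_mul]
  ring

end Update

section WeightedDiracs

variable {κ : Type*} [Fintype κ] [MeasurableSpace κ] {w : κ → ℝ}

noncomputable def weightedDiracs (w : κ → ℝ) : Measure κ :=
  ∑ m, ENNReal.ofReal (w m) • Measure.dirac m

instance isFiniteMeasure_weightedDiracs : IsFiniteMeasure (weightedDiracs w) :=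
  ⟨by simp [weightedDiracs, ENNReal.sum_lt_top]⟩

lemma isProbabilityMeasure_weightedDiracs (hw : 0 ≤ w) (h1 : ∑ m, w m = 1) :
    IsProbabilityMeasure (weightedDiracs w) := by
  constructor
  simp [weightedDiracs, ← ENNReal.ofReal_sum_of_nonneg fun m _ ↦ hw m, h1]

lemma weightedDiracs_smul_add_smul {w₁ w₂ : κ → ℝ} (hw₁ : 0 ≤ w₁) (hw₂ : 0 ≤ w₂) {a b : ℝ}
    (ha : 0 ≤ a) (hb : 0 ≤ b) :
    weightedDiracs (a • w₁ + b • w₂) =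
      ENNReal.ofReal a • weightedDiracs w₁ + ENNReal.ofReal b • weightedDiracs w₂ := by
  simp only [weightedDiracs, Finset.smul_sum, smul_smul, ← Finset.sum_add_distrib, ← add_smul,
    Pi.add_apply, Pi.smul_apply, smul_eq_mul]
  refine Finset.sum_congr rfl fun m _ ↦ ?_
  rw [ENNReal.ofReal_add (mul_nonneg ha (hw₁ m)) (mul_nonneg hb (hw₂ m)), ENNReal.ofReal_mul ha,
    ENNReal.ofReal_mul hb]

variable [MeasurableSingletonClass κ]

lemma integral_weightedDiracs (hw : 0 ≤ w) (f : κ → ℝ) :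
    ∫ t, f t ∂weightedDiracs w = ∑ m, w m * f m := by
  rw [weightedDiracs, integral_finsetSum_measure fun m _ ↦
    Integrable.of_finite.smul_measure ENNReal.ofReal_ne_top]
  simp [integral_smul_measure, ENNReal.toReal_ofReal (hw _)]

lemma variance_weightedDiracs (hw : 0 ≤ w) (f : κ → ℝ) :
    Var[f; weightedDiracs w] = ∑ m, w m * (f m - ∑ m', w m' * f m') ^ 2 := by
  rw [variance_eq_integral Measurable.of_discrete.aemeasurable, integral_weightedDiracs hw,
    integral_weightedDiracs hw]

end WeightedDiracs

section PiLaw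

variable {ι : Type*} [Fintype ι] {Ω : ι → Type*} [∀ i, MeasurableSpace (Ω i)]
  {μ : ∀ i, Measure (Ω i)} [∀ i, IsProbabilityMeasure (μ i)] {X : ∀ i, Ω i → ℝ}

noncomputable def piLaw (μ : ∀ i, Measure (Ω i)) (X : ∀ i, Ω i → ℝ) :
    Measure (EuclideanSpace ℝ ι) :=
  (Measure.pi μ).map fun ω ↦ toLp 2 fun i ↦ X i (ω i)

lemma aemeasurable_toLp_comp_eval (hX : ∀ i, AEMeasurable (X i) (μ i)) :
    AEMeasurable (fun ω ↦ toLp 2 fun i ↦ X i (ω i) : (∀ i, Ω i) → EuclideanSpace ℝ ι)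
      (Measure.pi μ) :=
  (measurable_toLp 2 _).comp_aemeasurable <| aemeasurable_pi_lambda _ fun i ↦
    (hX i).comp_quasiMeasurePreserving (Measure.quasiMeasurePreserving_eval μ i)

lemma isProbabilityMeasure_piLaw (hX : ∀ i, AEMeasurable (X i) (μ i)) :
    IsProbabilityMeasure (piLaw μ X) :=
  Measure.isProbabilityMeasure_map (aemeasurable_toLp_comp_eval hX)

lemma piLaw_eq_smul_add_smul_update [DecidableEq ι] (hX : ∀ i, Measurable (X i)) {i : ι}
    {ν₁ ν₂ : Measure (Ω i)} [SigmaFinite ν₁] [SigmaFinite ν₂] {a b : ENNReal}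
    (h : μ i = a • ν₁ + b • ν₂) :
    piLaw μ X = a • piLaw (update μ i ν₁) X + b • piLaw (update μ i ν₂) X := by
  have hmeas : Measurable fun ω : ∀ i, Ω i ↦ (toLp 2 fun i ↦ X i (ω i) : EuclideanSpace ℝ ι) :=
    (measurable_toLp 2 _).comp <|
      measurable_pi_lambda _ fun i ↦ (hX i).comp (measurable_pi_apply i)
  rw [piLaw, Measure.pi_eq_smul_add_smul_update h, Measure.map_add _ _ hmeas, Measure.map_smul,
    Measure.map_smul, piLaw, piLaw]

lemma memLp_id_piLaw (hX : ∀ i, MemLp (X i) 2 (μ i)) : MemLp id 2 (piLaw μ X) :=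
  (memLp_map_measure_iff aestronglyMeasurable_id
    (aemeasurable_toLp_comp_eval fun i ↦ (hX i).aemeasurable)).2 <|
      MemLp.of_eval_piLp fun i ↦ (hX i).comp_measurePreserving (measurePreserving_eval μ i)

lemma integrable_id_piLaw (hX : ∀ i, MemLp (X i) 2 (μ i)) : Integrable id (piLaw μ X) :=
  have := isProbabilityMeasure_piLaw fun i ↦ (hX i).aemeasurable
  (memLp_id_piLaw hX).integrable one_le_two

lemma integral_id_piLaw (hX : ∀ i, Integrable (X i) (μ i)) :
    ∫ x, x ∂piLaw μ X = toLp 2 fun i ↦ ∫ t, X i t ∂μ i := by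
  ext i
  rw [piLaw, integral_map (aemeasurable_toLp_comp_eval fun i ↦ (hX i).aemeasurable)
    (f := fun x ↦ x) aestronglyMeasurable_id, eval_integral_piLp]
  · exact integral_comp_eval (hX i).aestronglyMeasurable
  · exact fun i ↦ integrable_comp_eval (hX i)

lemma covarianceBilin_piLaw_self (hX : ∀ i, MemLp (X i) 2 (μ i)) (v : EuclideanSpace ℝ ι) :
    covarianceBilin (piLaw μ X) v v = ∑ i, v i ^ 2 * Var[X i; μ i] := by
  have := isProbabilityMeasure_piLaw fun i ↦ (hX i).aemeasurable
  rw [covarianceBilin_self (memLp_id_piLaw hX), piLaw, variance_map]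
  · have hsum : (fun u : EuclideanSpace ℝ ι ↦ inner ℝ v u) ∘ (fun ω ↦ toLp 2 fun i ↦ X i (ω i)) =
        ∑ i, fun ω : ∀ i, Ω i ↦ v i * X i (ω i) := by
      ext ω
      simp [PiLp.inner_apply, mul_comm]
    rw [hsum, variance_sum_pi fun i ↦ (hX i).const_mul (v i)]
    simp_rw [variance_const_mul]
  · fun_prop
  · exact aemeasurable_toLp_comp_eval fun i ↦ (hX i).aemeasurable

lemma integral_inner_sub_sq_piLaw_le (hX : ∀ i, MemLp (X i) 2 (μ i))
    (hvar : ∀ i, Var[X i; μ i] ≤ 1) (v : EuclideanSpace ℝ ι) :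
    ∫ x, inner ℝ v (x - ∫ y, y ∂piLaw μ X) ^ 2 ∂piLaw μ X ≤ ‖v‖ ^ 2 := by
  have := isProbabilityMeasure_piLaw fun i ↦ (hX i).aemeasurable
  calc ∫ x, inner ℝ v (x - ∫ y, y ∂piLaw μ X) ^ 2 ∂piLaw μ X
      = covarianceBilin (piLaw μ X) v v := by
        simp only [covarianceBilin_apply (memLp_id_piLaw hX), id, sq]
    _ = ∑ i, v i ^ 2 * Var[X i; μ i] := covarianceBilin_piLaw_self hX v
    _ ≤ ∑ i, v i ^ 2 :=
        Finset.sum_le_sum fun i _ ↦ mul_le_of_le_one_right (sq_nonneg _) (hvar i)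
    _ = ‖v‖ ^ 2 := by simp [EuclideanSpace.real_norm_sq_eq]

end PiLaw

theorem exists_forall_le_dist_of_card_lt {E ι : Type*} [PseudoMetricSpace E] [Fintype ι]
    {c : ι → E} {r : ℝ} (hc : Pairwise fun i j ↦ r ≤ dist (c i) (c j)) {L : Finset E}
    (hL : L.card < Fintype.card ι) : ∃ i, ∀ f ∈ L, r / 2 ≤ dist f (c i) := by
  by_contra! h
  choose g hgL hg using h
  obtain ⟨i, -, j, -, hij, hgij⟩ :=
    Finset.exists_ne_map_eq_of_card_lt_of_maps_to (s := Finset.univ) hL fun i _ ↦ hgL i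
  have hj := hg j
  rw [← hgij] at hj
  linarith [hc hij, hg i, dist_triangle_left (c i) (c j) (g i)]

lemma EuclideanSpace.dist_smul_single_sq {ι : Type*} [Fintype ι] [DecidableEq ι] {i j : ι}
    (hij : i ≠ j) (a : ℝ) :
    dist (a • single i 1 : EuclideanSpace ℝ ι) (a • single j 1) ^ 2 = 2 * a ^ 2 := by
  rw [dist_eq_norm, ← smul_sub, norm_smul, mul_pow, @norm_sub_sq_real, inner_single_left,
    PiLp.single_apply, if_neg hij]
  norm_num [mul_comm]

lemma Real.rpow_neg_half_sq {x : ℝ} (hx : 0 ≤ x) : (x ^ (-(1 : ℝ) / 2)) ^ 2 = x⁻¹ := by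
  rw [← Real.rpow_natCast, ← Real.rpow_mul hx]
  norm_num [Real.rpow_neg_one]

lemma EuclideanSpace.le_dist_smul_single {ι : Type*} [Fintype ι] [DecidableEq ι] {i j : ι}
    (hij : i ≠ j) {a r : ℝ} (hr : 0 ≤ r) (h : r ^ 2 ≤ 2 * a ^ 2) :
    r ≤ dist (a • single i 1 : EuclideanSpace ℝ ι) (a • single j 1) :=
  (pow_le_pow_iff_left₀ hr dist_nonneg two_ne_zero).1 (dist_smul_single_sq hij a ▸ h)

noncomputable def atoms (s : ℝ) : Fin 3 → ℝ := ![0, s, -s]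
noncomputable def mixtureWeights (α : ℝ) : Fin 3 → ℝ := ![1 - 2 * α, α, α]
def inlierWeights : Fin 3 → ℝ := ![0, 1, 0]
noncomputable def outlierWeights (α : ℝ) : Fin 3 → ℝ := ![(1 - 2 * α) / (1 - α), 0, α / (1 - α)]

section ThreePoint

variable {α : ℝ}

lemma mixtureWeights_nonneg (h0 : 0 ≤ α) (h : α ≤ 1 / 2) : 0 ≤ mixtureWeights α := by
  intro m; fin_cases m <;> simp [mixtureWeights] <;> linarith

lemma sum_mixtureWeights : ∑ m, mixtureWeights α m = 1 := by
  simp only [mixtureWeights, Fin.sum_univ_three, Matrix.cons_val_zero, Matrix.cons_val_one,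
    Matrix.cons_val]
  ring

lemma inlierWeights_nonneg : 0 ≤ inlierWeights := by
  intro m; fin_cases m <;> simp [inlierWeights]

lemma sum_inlierWeights : ∑ m, inlierWeights m = 1 := by
  simp [inlierWeights, Fin.sum_univ_three]

lemma outlierWeights_nonneg (h0 : 0 ≤ α) (h : α ≤ 1 / 2) : 0 ≤ outlierWeights α := by
  have : 0 < 1 - α := by linarith
  intro m; fin_cases m <;> simp [outlierWeights] <;> apply div_nonneg <;> linarith

lemma sum_outlierWeights (h : α < 1) : ∑ m, outlierWeights α m = 1 := by
  have : 1 - α ≠ 0 := by linarith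
  simp only [outlierWeights, Fin.sum_univ_three, Matrix.cons_val_zero, Matrix.cons_val_one,
    Matrix.cons_val]
  field_simp
  ring

lemma mixtureWeights_eq (h : α < 1) :
    mixtureWeights α = α • inlierWeights + (1 - α) • outlierWeights α := by
  have : 1 - α ≠ 0 := by linarith
  ext m; fin_cases m <;> simp [mixtureWeights, inlierWeights, outlierWeights] <;> field_simp

lemma integral_atoms_mixtureWeights (h0 : 0 ≤ α) (h : α ≤ 1 / 2) (s : ℝ) :
    ∫ t, atoms s t ∂weightedDiracs (mixtureWeights α) = 0 := by
  rw [integral_weightedDiracs (mixtureWeights_nonneg h0 h)]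
  simp [mixtureWeights, atoms, Fin.sum_univ_three]

lemma variance_atoms_mixtureWeights (h0 : 0 ≤ α) (h : α ≤ 1 / 2) (s : ℝ) :
    Var[atoms s; weightedDiracs (mixtureWeights α)] = 2 * α * s ^ 2 := by
  rw [variance_weightedDiracs (mixtureWeights_nonneg h0 h)]
  simp only [mixtureWeights, atoms, Fin.sum_univ_three, Matrix.cons_val_zero,
    Matrix.cons_val_one, Matrix.cons_val]
  ring

lemma integral_atoms_inlierWeights (s : ℝ) :
    ∫ t, atoms s t ∂weightedDiracs inlierWeights = s := by
  rw [integral_weightedDiracs inlierWeights_nonneg]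
  simp [inlierWeights, atoms, Fin.sum_univ_three]

lemma variance_atoms_inlierWeights (s : ℝ) :
    Var[atoms s; weightedDiracs inlierWeights] = 0 := by
  rw [variance_weightedDiracs inlierWeights_nonneg]
  simp [inlierWeights, atoms, Fin.sum_univ_three]

end ThreePoint

section Construction

variable {n : ℕ} {α : ℝ}

noncomputable def bulkLaw (n : ℕ) (α s : ℝ) : Measure (EuclideanSpace ℝ (Fin n)) :=
  piLaw (fun _ ↦ weightedDiracs (mixtureWeights α)) fun _ ↦ atoms s

noncomputable def spikedLaw (α s : ℝ) (w : Fin 3 → ℝ) (i : Fin n) :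
    Measure (EuclideanSpace ℝ (Fin n)) :=
  piLaw (update (fun _ ↦ weightedDiracs (mixtureWeights α)) i (weightedDiracs w)) fun _ ↦ atoms s

lemma isProbabilityMeasure_mixtureWeights (h0 : 0 ≤ α) (h : α ≤ 1 / 2) :
    IsProbabilityMeasure (weightedDiracs (mixtureWeights α)) :=
  isProbabilityMeasure_weightedDiracs (mixtureWeights_nonneg h0 h) sum_mixtureWeights

lemma isProbabilityMeasure_bulkLaw (h0 : 0 ≤ α) (h : α ≤ 1 / 2) (s : ℝ) :
    IsProbabilityMeasure (bulkLaw n α s) :=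
  have := isProbabilityMeasure_mixtureWeights h0 h
  isProbabilityMeasure_piLaw fun _ ↦ Measurable.of_discrete.aemeasurable

variable {w : Fin 3 → ℝ}

lemma isProbabilityMeasure_spikedLaw (h0 : 0 ≤ α) (h : α ≤ 1 / 2) (hw : 0 ≤ w)
    (h1 : ∑ m, w m = 1) (s : ℝ) (i : Fin n) : IsProbabilityMeasure (spikedLaw α s w i) :=
  have := isProbabilityMeasure_mixtureWeights h0 h
  have := isProbabilityMeasure_weightedDiracs hw h1
  isProbabilityMeasure_piLaw fun _ ↦ Measurable.of_discrete.aemeasurable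

lemma integrable_id_spikedLaw (h0 : 0 ≤ α) (h : α ≤ 1 / 2) (hw : 0 ≤ w) (h1 : ∑ m, w m = 1)
    (s : ℝ) (i : Fin n) : Integrable id (spikedLaw α s w i) :=
  have := isProbabilityMeasure_mixtureWeights h0 h
  have := isProbabilityMeasure_weightedDiracs hw h1
  integrable_id_piLaw fun _ ↦ MemLp.of_discrete

lemma bulkLaw_eq_smul_add_smul (h0 : 0 ≤ α) (h : α ≤ 1 / 2) (s : ℝ) (i : Fin n) :
    bulkLaw n α s = ENNReal.ofReal α • spikedLaw α s inlierWeights i +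
      ENNReal.ofReal (1 - α) • spikedLaw α s (outlierWeights α) i := by
  have := isProbabilityMeasure_mixtureWeights h0 h
  refine piLaw_eq_smul_add_smul_update (fun _ ↦ Measurable.of_discrete) ?_
  rw [← weightedDiracs_smul_add_smul inlierWeights_nonneg (outlierWeights_nonneg h0 h) h0
    (by linarith), ← mixtureWeights_eq (by linarith)]

lemma integral_id_spikedLaw_inlierWeights (h0 : 0 ≤ α) (h : α ≤ 1 / 2) (s : ℝ) (i : Fin n) :
    ∫ x, x ∂spikedLaw α s inlierWeights i = s • EuclideanSpace.single i 1 := by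
  have := isProbabilityMeasure_mixtureWeights h0 h
  have := isProbabilityMeasure_weightedDiracs inlierWeights_nonneg sum_inlierWeights
  rw [spikedLaw, integral_id_piLaw fun _ ↦ Integrable.of_finite]
  ext j
  rcases eq_or_ne j i with rfl | hji
  · simpa using integral_atoms_inlierWeights s
  · simpa [hji] using integral_atoms_mixtureWeights h0 h s

lemma integral_inner_sub_sq_spikedLaw_inlierWeights_le (h0 : 0 ≤ α) (h : α ≤ 1 / 2) {s : ℝ}
    (hs : 2 * α * s ^ 2 ≤ 1) (i : Fin n) (v : EuclideanSpace ℝ (Fin n)) :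
    ∫ x, inner ℝ v (x - s • EuclideanSpace.single i 1) ^ 2 ∂spikedLaw α s inlierWeights i ≤
      ‖v‖ ^ 2 := by
  have := isProbabilityMeasure_mixtureWeights h0 h
  have := isProbabilityMeasure_weightedDiracs inlierWeights_nonneg sum_inlierWeights
  rw [← integral_id_spikedLaw_inlierWeights h0 h]
  refine integral_inner_sub_sq_piLaw_le (fun _ ↦ MemLp.of_discrete) (fun j ↦ ?_) v
  rcases eq_or_ne j i with rfl | hji
  · rw [update_self, variance_atoms_inlierWeights]
    exact zero_le_one
  · rwa [update_of_ne hji, variance_atoms_mixtureWeights h0 h]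

end Construction

theorem stmt_15 (n : ℕ) (α : ℝ) (hα0 : 0 < α) (hα : α ≤ 1 / 2) :
    (∃ (X : Measure (EuclideanSpace ℝ (Fin n)))
       (D Y : Fin n → Measure (EuclideanSpace ℝ (Fin n))),
      IsProbabilityMeasure X ∧ (∀ i, IsProbabilityMeasure (D i)) ∧
      (∀ i, IsProbabilityMeasure (Y i)) ∧
      (∀ i, X = ENNReal.ofReal α • D i + ENNReal.ofReal (1 - α) • Y i) ∧
      (∀ i, Integrable (fun x => x) (D i)) ∧
      (∀ i, (∫ x, x ∂(D i)) = ((2 * α) ^ (-(1 : ℝ) / 2)) • EuclideanSpace.single i 1) ∧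
      (∀ i, ∀ v : EuclideanSpace ℝ (Fin n),
        (∫ x, (inner ℝ v (x - ((2 * α) ^ (-(1 : ℝ) / 2)) • EuclideanSpace.single i 1) : ℝ) ^ 2
            ∂(D i)) ≤ ‖v‖ ^ 2)) ∧
    ∀ L : Finset (EuclideanSpace ℝ (Fin n)), L.card < n →
      ∃ i : Fin n, ∀ f ∈ L,
        (1 / 2) * α ^ (-(1 : ℝ) / 2) ≤
          ‖f - ((2 * α) ^ (-(1 : ℝ) / 2)) • EuclideanSpace.single i 1‖ := by
  set s := (2 * α) ^ (-(1 : ℝ) / 2)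
  have hs : s ^ 2 = (2 * α)⁻¹ := Real.rpow_neg_half_sq (by positivity)
  refine ⟨⟨bulkLaw n α s, spikedLaw α s inlierWeights, spikedLaw α s (outlierWeights α),
    isProbabilityMeasure_bulkLaw hα0.le hα s,
    isProbabilityMeasure_spikedLaw hα0.le hα inlierWeights_nonneg sum_inlierWeights s,
    isProbabilityMeasure_spikedLaw hα0.le hα (outlierWeights_nonneg hα0.le hα)
      (sum_outlierWeights (by linarith)) s,
    bulkLaw_eq_smul_add_smul hα0.le hα s,
    integrable_id_spikedLaw hα0.le hα inlierWeights_nonneg sum_inlierWeights s,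
    integral_id_spikedLaw_inlierWeights hα0.le hα s,
    integral_inner_sub_sq_spikedLaw_inlierWeights_le hα0.le hα
      (by rw [hs, mul_inv_cancel₀ (by positivity)])⟩, fun L hL ↦ ?_⟩
  have hsep : Pairwise fun i j : Fin n ↦ α ^ (-(1 : ℝ) / 2) ≤
      dist (s • EuclideanSpace.single i (1 : ℝ)) (s • EuclideanSpace.single j 1) := by
    refine fun i j hij ↦ EuclideanSpace.le_dist_smul_single hij (by positivity) ?_
    rw [hs, Real.rpow_neg_half_sq hα0.le, mul_inv, ← mul_assoc, mul_inv_cancel₀ two_ne_zero,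
      one_mul]
  obtain ⟨i, hi⟩ := exists_forall_le_dist_of_card_lt hsep (by simpa using hL)
  exact ⟨i, fun f hf ↦ by linarith [hi f hf, dist_eq_norm f (s • EuclideanSpace.single i 1)]⟩
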